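/- arXiv:2010.13332 — 5 statements merged into one kernel-verified Lean document; each statement's English description precedes it below -/
import Mathlib

section
/- For a symmetric positive definite (p+1)×(p+1) matrix Σ with entries σⱼₖ, σ₁² = σ₁₁, r₁ⱼ = (Σ⁻¹)₁ⱼ, and any κ ≥ −1/2, the quantity c₁ := (1+κ) σ₁² (r₁₁² σ₁² − r₁₁) + (1+2κ)(1 − r₁₁ σ₁²)² is nonnegative. -/
open Matrix

/-- Cauchy–Schwarz for the form `(x, y) ↦ x ⬝ᵥ S *ᵥ y` at `x = eᵢ`, `y = S⁻¹ eᵢ`. -/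
theorem Matrix.PosDef.one_le_diag_mul_inv_diag {n : Type*} [Fintype n] [DecidableEq n]
    {S : Matrix n n ℝ} (hS : S.PosDef) (i : n) : 1 ≤ S i i * S⁻¹ i i := by
  have hunit : IsUnit S.det := hS.isUnit.map detMonoidHom
  have hsymm : (toBilin' S).IsSymm :=
    isSymm_toBilin'_iff_isSymm.mpr (isHermitian_iff_isSymm.mp hS.isHermitian)
  have hnonneg : ∀ x, 0 ≤ S.toBilin' x x := fun x => by
    simpa [toBilin'_apply'] using hS.posSemidef.dotProduct_mulVec_nonneg x
  set e : n → ℝ := Pi.single i 1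
  have hcancel : S *ᵥ (S⁻¹ *ᵥ e) = e := by
    rw [mulVec_mulVec, mul_nonsing_inv S hunit, one_mulVec]
  have h_ee : S.toBilin' e e = S i i := by simp [e, toBilin'_apply']
  have h_ey : S.toBilin' e (S⁻¹ *ᵥ e) = 1 := by
    rw [toBilin'_apply', hcancel]
    simp [e]
  have h_yy : S.toBilin' (S⁻¹ *ᵥ e) (S⁻¹ *ᵥ e) = S⁻¹ i i := by
    rw [toBilin'_apply', hcancel]
    simp [e]
  simpa [h_ee, h_ey, h_yy] using
    (S.toBilin').apply_sq_le_of_symm hnonneg (LinearMap.BilinForm.isSymm_iff.mp hsymm) e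
      (S⁻¹ *ᵥ e)

theorem stmt5 (p : ℕ) (S : Matrix (Fin (p + 1)) (Fin (p + 1)) ℝ)
    (hS : S.PosDef) (κ : ℝ) (hκ : -1/2 ≤ κ) :
    0 ≤ (1 + κ) * S 0 0 * ((S⁻¹ 0 0) ^ 2 * S 0 0 - S⁻¹ 0 0) +
        (1 + 2 * κ) * (1 - S⁻¹ 0 0 * S 0 0) ^ 2 := by
  set t := S 0 0 * S⁻¹ 0 0
  have ht : 1 ≤ t := hS.one_le_diag_mul_inv_diag 0
  have hfactor : (1 + κ) * S 0 0 * ((S⁻¹ 0 0) ^ 2 * S 0 0 - S⁻¹ 0 0) +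
      (1 + 2 * κ) * (1 - S⁻¹ 0 0 * S 0 0) ^ 2 =
      (t - 1) * ((1 + κ) * t + (1 + 2 * κ) * (t - 1)) := by ring
  rw [hfactor]
  have hκ₁ : 0 ≤ 1 + κ := by linarith
  have hκ₂ : 0 ≤ 1 + 2 * κ := by linarith
  exact mul_nonneg (by linarith)
    (add_nonneg (mul_nonneg hκ₁ (by linarith)) (mul_nonneg hκ₂ (by linarith)))
end

section
/- Let f(β₂) = −r₁₁²((1+2κ)σ₁₂² + (1+κ)σ₁²σ₂²)·c·β₂² + (1+κ)·c·(2r₁₁ − r₁₁²σ₁²)σ², where c = 1/q₋₁ − 1/q₁ > 0, κ > −1/2, σ² > 0, σ₁²σ₂² > σ₁₂² > 0, and r₁₁ = σ₂²/(σ₁²σ₂² − σ₁₂²). If σ₁²σ₂² > 2σ₁₂², then f(β₂) > 0 if and only if |β₂| < C/2 where C = √(4(σ₁²σ₂² − 2σ₁₂²)σ² / (((1+2κ)/(1+κ))σ₁₂² + σ₁²σ₂²) / σ₂²). -/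
/-
Writing `c = 1/q₋₁ - 1/q₁`, `f` is the downward parabola `-A β₂² + B` with
`A = r₁₁² ((1+2κ)σ₁₂² + (1+κ)σ₁²σ₂²) c > 0`, so `f β₂ > 0 ↔ β₂² < B / A ↔ |β₂| < √(B / A)`,
and clearing denominators (using `r₁₁ = σ₂² / (σ₁²σ₂² - σ₁₂²)`) gives `B / A = (C / 2)²`.
No sign of `B` is needed: if `B ≤ 0` then `√(B / A) = 0` and both sides are false.
-/

theorem neg_mul_sq_add_pos_iff_abs_lt_sqrt {a b x : ℝ} (ha : 0 < a) :
    0 < -a * x ^ 2 + b ↔ |x| < √(b / a) := by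
  rw [Real.lt_sqrt (abs_nonneg x), sq_abs, lt_div_iff₀ ha]
  constructor <;> intro h <;> linarith

theorem stmt9_general (s1 s2 s12 σsq κ q1 qm1 : ℝ)
    (hκ : -1/2 < κ)
    (hq : 0 < 1 / qm1 - 1 / q1)
    (r11 : ℝ) (hr : r11 = s2 / (s1 * s2 - s12 ^ 2))
    (f : ℝ → ℝ)
    (hf : ∀ β2, f β2 =
      -r11 ^ 2 * ((1 + 2 * κ) * s12 ^ 2 + (1 + κ) * s1 * s2) *
          (1 / qm1 - 1 / q1) * β2 ^ 2 +
        (1 + κ) * (1 / qm1 - 1 / q1) * (2 * r11 - r11 ^ 2 * s1) * σsq)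
    (hcond : 2 * s12 ^ 2 < s1 * s2)
    (C : ℝ)
    (hC : C = Real.sqrt (4 * (s1 * s2 - 2 * s12 ^ 2) * σsq /
      ((((1 + 2 * κ) / (1 + κ)) * s12 ^ 2 + s1 * s2) * s2))) :
    ∀ β2, f β2 > 0 ↔ |β2| < C / 2 := by
  intro β2
  set c := 1 / qm1 - 1 / q1
  set P := (1 + 2 * κ) * s12 ^ 2 + (1 + κ) * s1 * s2
  have hss : 0 < s1 * s2 := by linarith [sq_nonneg s12]
  have hs2 : s2 ≠ 0 := by rintro rfl; simp at hss
  have hd : s1 * s2 - s12 ^ 2 ≠ 0 := by linarith [sq_nonneg s12]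
  have hκ1 : 0 < 1 + κ := by linarith
  have hP : 0 < P := by nlinarith [sq_nonneg s12]
  have hr11 : r11 ≠ 0 := hr ▸ div_ne_zero hs2 hd
  have hA : 0 < r11 ^ 2 * P * c := by positivity
  have hC2 : C / 2 = √((1 + κ) * c * (2 * r11 - r11 ^ 2 * s1) * σsq / (r11 ^ 2 * P * c)) := by
    rw [hC, show (2 : ℝ) = √(2 ^ 2) by simp, ← Real.sqrt_div' _ (by positivity)]
    congr 1
    subst hr
    simp only [P] at hP ⊢
    field_simp
    ring
  rw [gt_iff_lt, hf, hC2, ← neg_mul_sq_add_pos_iff_abs_lt_sqrt hA]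
  simp only [neg_mul]

theorem stmt9 (s1 s2 s12 σsq κ q1 qm1 : ℝ)
    (hκ : -1/2 < κ) (hσ : 0 < σsq)
    (hs12pos : 0 < s12 ^ 2) (hpd : s12 ^ 2 < s1 * s2)
    (hq : 0 < 1 / qm1 - 1 / q1)
    (r11 : ℝ) (hr : r11 = s2 / (s1 * s2 - s12 ^ 2))
    (f : ℝ → ℝ)
    (hf : ∀ β2, f β2 =
      -r11 ^ 2 * ((1 + 2 * κ) * s12 ^ 2 + (1 + κ) * s1 * s2) *
          (1 / qm1 - 1 / q1) * β2 ^ 2 +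
        (1 + κ) * (1 / qm1 - 1 / q1) * (2 * r11 - r11 ^ 2 * s1) * σsq)
    (hcond : 2 * s12 ^ 2 < s1 * s2)
    (C : ℝ)
    (hC : C = Real.sqrt (4 * (s1 * s2 - 2 * s12 ^ 2) * σsq /
      ((((1 + 2 * κ) / (1 + κ)) * s12 ^ 2 + s1 * s2) * s2))) :
    ∀ β2, f β2 > 0 ↔ |β2| < C / 2 :=
  stmt9_general s1 s2 s12 σsq κ q1 qm1 hκ hq r11 hr f hf hcond C hC
end

section
/- Fix σ₂², σ₁₂, σ², κ with σ₂² > 0, σ² > 0, κ > −1/2, σ₁₂ ≠ 0. Define C(σ₁²) = √(4(σ₁²σ₂² − 2σ₁₂²)σ² / ((((1+2κ)/(1+κ))σ₁₂² + σ₁²σ₂²)σ₂²)) for σ₁² > 2σ₁₂²/σ₂². Then C is strictly increasing in σ₁² on (2σ₁₂²/σ₂², ∞). -/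
/-! Under the root, `C(s₁)²` is the positive constant `4σ²/σ₂²` times the Möbius map
`(σ₂²s₁ − b) / (a + σ₂²s₁)` with `a = (1+2κ)/(1+κ)·σ₁₂²` and `b = 2σ₁₂²`, and a Möbius map
`(px − b)/(a + px)` is increasing where defined as soon as its determinant `p(a + b)` is positive. -/

theorem strictMonoOn_sub_div_add {p a b : ℝ} (hp : 0 < p) (hab : 0 < a + b) :
    StrictMonoOn (fun x => (p * x - b) / (a + p * x)) (Set.Ioi (-a / p)) := by
  intro x hx y hy hxy
  have hx' : 0 < a + p * x := by rw [Set.mem_Ioi, div_lt_iff₀ hp] at hx; linarith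
  have hy' : 0 < a + p * y := by rw [Set.mem_Ioi, div_lt_iff₀ hp] at hy; linarith
  rw [div_lt_div_iff₀ hx' hy']
  nlinarith [mul_lt_mul_of_pos_left hxy (mul_pos hp hab)]

theorem stmt11 (s2 s12 σsq κ : ℝ)
    (hs2 : 0 < s2) (hσ : 0 < σsq) (hκ : -1/2 < κ) (hs12 : s12 ≠ 0) :
    StrictMonoOn (fun s1 : ℝ =>
      Real.sqrt (4 * (s1 * s2 - 2 * s12 ^ 2) * σsq /
        ((((1 + 2 * κ) / (1 + κ)) * s12 ^ 2 + s1 * s2) * s2)))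
      (Set.Ioi (2 * s12 ^ 2 / s2)) := by
  set a := (1 + 2 * κ) / (1 + κ) * s12 ^ 2
  set b := 2 * s12 ^ 2
  have ha : 0 < a := by
    have : 0 < 1 + κ := by linarith
    have : 0 < 1 + 2 * κ := by linarith
    positivity
  have hb : 0 < b := by positivity
  have hsplit : ∀ s1, 4 * (s1 * s2 - b) * σsq / ((a + s1 * s2) * s2) =
      (s2 * s1 - b) / (a + s2 * s1) * (4 * σsq / s2) := fun s1 => by
    rw [mul_comm 4, mul_assoc, mul_div_mul_comm, mul_comm s1]
  have hmono := (strictMonoOn_sub_div_add hs2 (add_pos ha hb)).mono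
    (Set.Ioi_subset_Ioi (div_le_div_of_nonneg_right (show -a ≤ b by linarith) hs2.le))
  intro x hx y hy hxy
  simp only [hsplit]
  have hx_nonneg : 0 ≤ (s2 * x - b) / (a + s2 * x) := by
    rw [Set.mem_Ioi, div_lt_iff₀ hs2] at hx
    exact div_nonneg (by linarith) (by nlinarith)
  exact Real.sqrt_lt_sqrt (mul_nonneg hx_nonneg (by positivity))
    (mul_lt_mul_of_pos_right (hmono hx hy hxy) (by positivity))
end

section
/- Fix σ₁², σ₂², σ², κ with σ₁², σ₂², σ² > 0 and κ > −1/2. The function C(σ₁₂) = √(4(σ₁²σ₂² − 2σ₁₂²)σ² / ((((1+2κ)/(1+κ))σ₁₂² + σ₁²σ₂²)σ₂²)), defined for σ₁₂² < σ₁²σ₂²/2, is strictly increasing on (−√(σ₁²σ₂²/2), 0) and strictly decreasing on (0, √(σ₁²σ₂²/2)). -/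
/-!
`C` depends on `σ₁₂` only through `t = σ₁₂²`, and under the square root stands a positive
multiple of the fractional linear map `t ↦ (σ₁²σ₂² - 2t) / (k t + σ₁²σ₂²)` with
`k = (1 + 2κ)/(1 + κ) > 0`. Its determinant `-σ₁²σ₂² (k + 2)` is negative, so `C` strictly
decreases in `t` on `[0, σ₁²σ₂²/2)`; and `σ₁₂ ↦ σ₁₂²` decreases on the negative half of the
interval and increases on the positive half.
-/

open Set

theorem strictAntiOn_sub_mul_div_mul_add {a b c d : ℝ} (h : 0 < a * c + b * d) :
    StrictAntiOn (fun t => (a - b * t) / (c * t + d)) {t | 0 < c * t + d} := by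
  intro t₁ (ht₁ : 0 < c * t₁ + d) t₂ (ht₂ : 0 < c * t₂ + d) hlt
  rw [div_lt_div_iff₀ ht₂ ht₁]
  nlinarith [mul_pos h (sub_pos.2 hlt)]

theorem StrictAntiOn.strictMonoOn_comp_sq {β : Type*} [Preorder β] {g : ℝ → β} {r : ℝ}
    (hg : StrictAntiOn g (Ico 0 (r ^ 2))) :
    StrictMonoOn (fun x => g (x ^ 2)) (Ioo (-r) 0) := by
  intro x ⟨hrx, hx⟩ y ⟨_, hy⟩ hxy
  exact hg ⟨sq_nonneg y, by nlinarith⟩ ⟨sq_nonneg x, by nlinarith⟩ (by nlinarith)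

theorem StrictAntiOn.strictAntiOn_comp_sq {β : Type*} [Preorder β] {g : ℝ → β} {r : ℝ}
    (hg : StrictAntiOn g (Ico 0 (r ^ 2))) :
    StrictAntiOn (fun x => g (x ^ 2)) (Ioo 0 r) :=
  hg.comp_strictMonoOn ((pow_left_strictMonoOn₀ two_ne_zero).mono fun _ hx => le_of_lt hx.1)
    fun x ⟨hx, hxr⟩ => ⟨sq_nonneg x, by nlinarith⟩

theorem efficiencyIntervalLength_sq_strictAntiOn {s1 s2 σsq κ : ℝ}
    (hs1 : 0 < s1) (hs2 : 0 < s2) (hσ : 0 < σsq) (hκ : -1/2 < κ) :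
    StrictAntiOn (fun t : ℝ => Real.sqrt (4 * (s1 * s2 - 2 * t) * σsq /
        ((((1 + 2 * κ) / (1 + κ)) * t + s1 * s2) * s2)))
      (Ico 0 (s1 * s2 / 2)) := by
  set k := (1 + 2 * κ) / (1 + κ)
  have hk : 0 < k := div_pos (by linarith) (by linarith)
  have hden : ∀ t ∈ Ico 0 (s1 * s2 / 2), 0 < k * t + s1 * s2 := fun t ht => by
    nlinarith [mul_nonneg hk.le ht.1]
  have hratio : StrictAntiOn (fun t => 4 * σsq / s2 * ((s1 * s2 - 2 * t) / (k * t + s1 * s2)))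
      (Ico 0 (s1 * s2 / 2)) := fun x hx y hy hxy =>
    mul_lt_mul_of_pos_left
      ((strictAntiOn_sub_mul_div_mul_add (by positivity)) (hden x hx) (hden y hy) hxy)
      (by positivity)
  have hpos : MapsTo (fun t => 4 * σsq / s2 * ((s1 * s2 - 2 * t) / (k * t + s1 * s2)))
      (Ico 0 (s1 * s2 / 2)) (Ici 0) := fun t ht =>
    mul_nonneg (by positivity) (div_nonneg (by linarith [ht.2]) (hden t ht).le)
  convert Real.strictMonoOn_sqrt.comp_strictAntiOn hratio hpos using 2 with t
  rw [Function.comp_apply, mul_right_comm 4, mul_comm (_ + s1 * s2) s2, mul_div_mul_comm]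

theorem stmt12 (s1 s2 σsq κ : ℝ)
    (hs1 : 0 < s1) (hs2 : 0 < s2) (hσ : 0 < σsq) (hκ : -1/2 < κ) :
    StrictMonoOn (fun s12 : ℝ =>
        Real.sqrt (4 * (s1 * s2 - 2 * s12 ^ 2) * σsq /
          ((((1 + 2 * κ) / (1 + κ)) * s12 ^ 2 + s1 * s2) * s2)))
        (Set.Ioo (-Real.sqrt (s1 * s2 / 2)) 0) ∧
    StrictAntiOn (fun s12 : ℝ =>
        Real.sqrt (4 * (s1 * s2 - 2 * s12 ^ 2) * σsq /
          ((((1 + 2 * κ) / (1 + κ)) * s12 ^ 2 + s1 * s2) * s2)))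
        (Set.Ioo (0 : ℝ) (Real.sqrt (s1 * s2 / 2))) := by
  have hC := efficiencyIntervalLength_sq_strictAntiOn hs1 hs2 hσ hκ
  rw [← Real.sq_sqrt (by positivity : (0 : ℝ) ≤ s1 * s2 / 2)] at hC
  exact ⟨hC.strictMonoOn_comp_sq, hC.strictAntiOn_comp_sq⟩
end

section
/- Let p ≥ 3, κ > −1/2, and let Σₓ be the exchangeable covariance matrix as above, positive definite. If ((p−2)σ₂'₃' + σ₂'²)σ₁² < 2(p−1)σ₁₂'², then 2r₁₁ − r₁₁²σ₁² < 0, where r₁₁ = ((p−2)σ₂'₃' + σ₂'²)/(−(p−1)σ₁₂'² + (p−2)σ₁²σ₂'₃' + σ₁²σ₂'²). -/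
/-!
On vectors `(a, b, …, b)` the quadratic form of the exchangeable matrix `Σₓ` is the binary form
`σ₁² a² + 2(p-1)σ₁₂' a b + (p-1) N b²` with `N = σ₂'² + (p-2)σ₂'₃'`, which is therefore positive
definite. Hence `N > 0` and `D = σ₁² N - (p-1)σ₁₂'² > 0`, so `r₁₁ = N / D > 0`, and the hypothesis says
exactly `r₁₁ σ₁² > 2`, whence `2 r₁₁ - r₁₁² σ₁² = r₁₁ (2 - r₁₁ σ₁²) < 0`.
-/

open Matrix

section OrderedField

variable {K : Type*} [Field K] [LinearOrder K] [IsStrictOrderedRing K]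

lemma pos_and_sq_lt_of_binaryForm_pos {α β γ : K}
    (h : ∀ a b : K, (a, b) ≠ 0 → 0 < α * a ^ 2 + 2 * β * a * b + γ * b ^ 2) :
    0 < α ∧ 0 < γ ∧ β ^ 2 < α * γ := by
  have hα : 0 < α := by simpa using h 1 0 (by simp)
  have hγ : 0 < γ := by simpa using h 0 1 (by simp)
  refine ⟨hα, hγ, ?_⟩
  -- the form takes the value `α (α γ - β²)` at `(β, -α)`
  have := h β (-α) (by simp [hα.ne'])
  nlinarith

lemma two_mul_div_sub_div_sq_mul_neg {N D s : K} (hN : 0 < N) (hD : 0 < D) (h : 2 * D < N * s) :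
    2 * (N / D) - (N / D) ^ 2 * s < 0 := by
  have hr : 0 < N / D := div_pos hN hD
  have hrs : 2 < N / D * s := by rw [div_mul_eq_mul_div, lt_div_iff₀ hD]; linarith
  nlinarith

end OrderedField

lemma vecCons_const_ne_zero {α : Type*} [Zero α] {n : ℕ} (hn : n ≠ 0) {a b : α}
    (hab : (a, b) ≠ 0) : (vecCons a fun _ : Fin n => b) ≠ 0 := by
  intro h
  refine hab (Prod.ext (congrFun h 0) ?_)
  simpa using congrFun h (Fin.succ ⟨0, Nat.pos_of_ne_zero hn⟩)

lemma exchangeable_dotProduct_mulVec_vecCons {n : ℕ} (S : Matrix (Fin (n + 1)) (Fin (n + 1)) ℝ)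
    (s1 s2 s12 s23 : ℝ)
    (hS : ∀ i j, S i j =
      if i = j then (if i = 0 then s1 else s2) else if i = 0 ∨ j = 0 then s12 else s23)
    (a b : ℝ) :
    vecCons a (fun _ => b) ⬝ᵥ S *ᵥ vecCons a (fun _ => b) =
      s1 * a ^ 2 + 2 * (n * s12) * a * b + n * (s2 + (n - 1) * s23) * b ^ 2 := by
  set v : Fin (n + 1) → ℝ := vecCons a fun _ => b
  have hrow (i : Fin n) : ∑ j : Fin n, S i.succ j.succ = s2 + (n - 1) * s23 := by
    simp only [hS, Fin.succ_inj, Fin.succ_ne_zero, or_self, if_false]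
    simp [Finset.sum_ite, Finset.filter_eq, Finset.filter_ne, Nat.cast_pred i.pos]
  have hzero : (S *ᵥ v) 0 = s1 * a + n * s12 * b := by
    simp [v, mulVec, dotProduct, Fin.sum_univ_succ, hS, (Fin.succ_ne_zero _).symm, mul_assoc]
  have hsucc (i : Fin n) : (S *ᵥ v) i.succ = s12 * a + (s2 + (n - 1) * s23) * b := by
    simp [v, mulVec, dotProduct, Fin.sum_univ_succ, ← Finset.sum_mul, hrow, hS i.succ 0,
      Fin.succ_ne_zero]
  simp only [dotProduct, Fin.sum_univ_succ, hzero, hsucc, v, cons_val_zero, cons_val_succ,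
    Finset.sum_const, Finset.card_univ, Fintype.card_fin, nsmul_eq_mul]
  ring

theorem stmt15 (p : ℕ) (hp : 3 ≤ p) (s1 s2' s12' s2'3' : ℝ)
    (Sx : Matrix (Fin p) (Fin p) ℝ)
    (hSx : ∀ i j : Fin p, Sx i j =
      if i = j then (if i = (⟨0, by omega⟩ : Fin p) then s1 else s2')
      else if i = (⟨0, by omega⟩ : Fin p) ∨ j = (⟨0, by omega⟩ : Fin p) then s12' else s2'3')
    (hpd : Sx.PosDef)
    (hcond : (((p : ℝ) - 2) * s2'3' + s2') * s1 < 2 * ((p : ℝ) - 1) * s12' ^ 2)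
    (r11 : ℝ)
    (hr : r11 = (((p : ℝ) - 2) * s2'3' + s2') /
      (-((p : ℝ) - 1) * s12' ^ 2 + ((p : ℝ) - 2) * s1 * s2'3' + s1 * s2')) :
    2 * r11 - r11 ^ 2 * s1 < 0 := by
  obtain ⟨n, rfl⟩ : ∃ n, p = n + 1 := ⟨p - 1, by omega⟩
  have hform (a b : ℝ) (hab : (a, b) ≠ 0) :
      0 < s1 * a ^ 2 + 2 * (n * s12') * a * b + n * (s2' + (n - 1) * s2'3') * b ^ 2 := by
    rw [← exchangeable_dotProduct_mulVec_vecCons Sx s1 s2' s12' s2'3' hSx]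
    exact hpd.dotProduct_mulVec_pos (vecCons_const_ne_zero (by omega) hab)
  obtain ⟨-, hnN, hdisc⟩ := pos_and_sq_lt_of_binaryForm_pos hform
  have hn : (0 : ℝ) < n := by exact_mod_cast (show 0 < n by omega)
  have hN : 0 < s2' + (n - 1) * s2'3' := pos_of_mul_pos_right hnN hn.le
  have hD : 0 < s1 * (s2' + (n - 1) * s2'3') - n * s12' ^ 2 := by
    nlinarith [mul_lt_mul_of_pos_left hdisc hn]
  push_cast at hcond hr
  rw [hr]
  apply two_mul_div_sub_div_sq_mul_neg <;> linarith
end
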